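/- Let 0 < α < d and suppose the uncentered fractional maximal function M_α f is differentiable at x. If B = B(z,r) is a ball with x ∈ closure(B) and M_α f(x) = r^α f_B, then |∇ M_α f(x)| ≤ (d-α) r^{α-1} f_B. Moreover, if x lies in the open ball B, then ∇ M_α f(x) = 0. -/

import Mathlib

/-! If `B = B(z, r)` realises `M_α f(x)` and `y` is near `x` with `h = |y - x|`, the ball
`B(z + (y - x), r + h)` contains both `y` and `B`, so
`M_α f(y) ≥ (r + h)^(α - d) r^d f_B ≥ r^α f_B - (d - α) r^(α - 1) f_B h`
by Bernoulli's inequality for the exponent `α - d ≤ 0`. Thus `M_α f` decreases at rate at most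
`(d - α) r^(α - 1) f_B` in every direction, which bounds its gradient. If `x ∈ B`, the same ball
shows that `x` is a local minimum of `M_α f`. -/

open MeasureTheory Metric Set Filter Topology

noncomputable section

abbrev Euc (d : ℕ) : Type := EuclideanSpace ℝ (Fin d)

def setAvg {d : ℕ} (s : Set (Euc d)) (f : Euc d → ℝ) : ℝ :=
  (volume s).toReal⁻¹ * ∫ y in s, f y

/-- The uncentered fractional Hardy–Littlewood maximal function. -/
def Mu (d : ℕ) (α : ℝ) (f : Euc d → ℝ) (x : Euc d) : ℝ :=
  sSup {v | ∃ z : Euc d, ∃ r : ℝ, 0 < r ∧ x ∈ ball z r ∧ v = r ^ α * setAvg (ball z r) f}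

theorem Real.one_add_mul_le_rpow_one_add_of_nonpos {s p : ℝ} (hs : -1 < s) (hp : p ≤ 0) :
    1 + p * s ≤ (1 + s) ^ p := by
  have hpos : 0 < 1 + s := by linarith
  have hlog : Real.log (1 + s) ≤ s := by linarith [Real.log_le_sub_one_of_pos hpos]
  calc 1 + p * s ≤ 1 + p * Real.log (1 + s) := by
        linarith [mul_le_mul_of_nonpos_left hlog hp]
    _ ≤ Real.exp (p * Real.log (1 + s)) := by linarith [Real.add_one_le_exp (p * Real.log (1 + s))]
    _ = (1 + s) ^ p := by rw [Real.rpow_def_of_pos hpos, mul_comm]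

section Derivative

variable {E : Type*} [NormedAddCommGroup E] [NormedSpace ℝ E]

theorem HasFDerivAt.neg_mul_norm_le_apply_of_eventually_sub_le {g : E → ℝ} {L : E →L[ℝ] ℝ}
    {x : E} {C : ℝ} (hg : HasFDerivAt g L x) (hdec : ∀ᶠ y in 𝓝 x, g x - C * ‖y - x‖ ≤ g y)
    (v : E) : -(C * ‖v‖) ≤ L v := by
  set line : ℝ → E := fun t => x + t • v
  have hline : HasDerivAt line v 0 := by
    simpa only [one_smul] using ((hasDerivAt_id' (0 : ℝ)).smul_const v).const_add x
  have hline0 : line 0 = x := by simp [line]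
  have hgline : HasDerivAt (g ∘ line) (L v) 0 := (hline0 ▸ hg).comp_hasDerivAt 0 hline
  have hslope := (hasDerivAt_iff_tendsto_slope.mp hgline).mono_left (nhdsGT_le_nhdsNE 0)
  have hdec0 : ∀ᶠ y in 𝓝 (line 0), g x - C * ‖y - x‖ ≤ g y := by rwa [hline0]
  have hdec_line : ∀ᶠ t in 𝓝[>] (0 : ℝ), g x - C * ‖line t - x‖ ≤ g (line t) :=
    nhdsWithin_le_nhds (hline.continuousAt.tendsto.eventually hdec0)
  refine ge_of_tendsto hslope ?_
  filter_upwards [hdec_line, self_mem_nhdsWithin] with t ht (htpos : 0 < t)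
  have hdist : ‖line t - x‖ = t * ‖v‖ := by
    simp [line, norm_smul, _root_.abs_of_pos htpos]
  rw [slope_def_field, sub_zero, le_div_iff₀ htpos, Function.comp_apply, Function.comp_apply,
    hline0]
  linarith [hdist ▸ ht]

theorem HasFDerivAt.norm_le_of_eventually_sub_le {g : E → ℝ} {L : E →L[ℝ] ℝ} {x : E} {C : ℝ}
    (hg : HasFDerivAt g L x) (hC : 0 ≤ C) (hdec : ∀ᶠ y in 𝓝 x, g x - C * ‖y - x‖ ≤ g y) :
    ‖L‖ ≤ C := by
  refine L.opNorm_le_bound hC fun v => abs_le.mpr ⟨?_, ?_⟩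
  · exact hg.neg_mul_norm_le_apply_of_eventually_sub_le hdec v
  · have := hg.neg_mul_norm_le_apply_of_eventually_sub_le hdec (-v)
    rw [norm_neg, map_neg] at this
    linarith

end Derivative

section MaximalFunction

variable {d : ℕ} {α : ℝ} {f : Euc d → ℝ}

theorem setAvg_nonneg {s : Set (Euc d)} (hf : 0 ≤ f) : 0 ≤ setAvg s f :=
  mul_nonneg (inv_nonneg.mpr ENNReal.toReal_nonneg) (integral_nonneg hf)

theorem Mu_nonneg (hf : 0 ≤ f) (x : Euc d) : 0 ≤ Mu d α f x := by
  refine Real.sSup_nonneg ?_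
  rintro v ⟨z, r, hr, -, rfl⟩
  exact mul_nonneg (Real.rpow_nonneg hr.le α) (setAvg_nonneg hf)

/-- `sSup` of an unbounded set of reals is `0`, so positivity of `Mu` forces boundedness. -/
theorem le_Mu_of_pos {x z : Euc d} {r : ℝ} (hpos : 0 < Mu d α f x) (hr : 0 < r)
    (hx : x ∈ ball z r) : r ^ α * setAvg (ball z r) f ≤ Mu d α f x := by
  refine le_csSup ?_ ⟨z, r, hr, hx, rfl⟩
  by_contra hunbdd
  rw [Mu, Real.sSup_of_not_bddAbove hunbdd] at hpos
  exact hpos.false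

theorem eventually_forall_ball_le_Mu {x : Euc d} (hcont : ContinuousAt (Mu d α f) x)
    (hpos : 0 < Mu d α f x) :
    ∀ᶠ y in 𝓝 x, ∀ (w : Euc d) (s : ℝ), 0 < s → y ∈ ball w s →
      s ^ α * setAvg (ball w s) f ≤ Mu d α f y := by
  filter_upwards [hcont.eventually (lt_mem_nhds hpos)] with y hy w s hs hyw
  exact le_Mu_of_pos hy hs hyw

theorem pow_mul_setAvg_ball {z : Euc d} {r : ℝ} (hr : 0 < r) :
    r ^ d * setAvg (ball z r) f = (∫ y in ball z r, f y) / (volume (ball (0 : Euc d) 1)).toReal := by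
  have hunit : (volume (ball (0 : Euc d) 1)).toReal ≠ 0 :=
    (ENNReal.toReal_pos (measure_ball_pos volume 0 one_pos).ne' measure_ball_lt_top.ne).ne'
  rw [setAvg, Measure.addHaar_ball_of_pos volume z hr, ENNReal.toReal_mul,
    ENNReal.toReal_ofReal (by positivity), finrank_euclideanSpace_fin]
  field_simp

theorem pow_mul_setAvg_ball_le_of_subset (hf : 0 ≤ f) (hloc : LocallyIntegrable f volume)
    {z w : Euc d} {r s : ℝ} (hr : 0 < r) (hs : 0 < s) (hsub : ball z r ⊆ ball w s) :
    r ^ d * setAvg (ball z r) f ≤ s ^ d * setAvg (ball w s) f := by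
  rw [pow_mul_setAvg_ball hr, pow_mul_setAvg_ball hs]
  refine div_le_div_of_nonneg_right ?_ ENNReal.toReal_nonneg
  exact setIntegral_mono_set
    ((hloc.integrableOn_isCompact (isCompact_closedBall w s)).mono_set ball_subset_closedBall)
    (Eventually.of_forall hf) hsub.eventuallyLE

theorem sub_le_of_forall_ball_le (hαd : α ≤ d) (hf : 0 ≤ f) (hloc : LocallyIntegrable f volume)
    {x y z : Euc d} {r M : ℝ} (hr : 0 < r) (hxz : dist x z ≤ r) (hyx : y ≠ x)
    (hM : ∀ (w : Euc d) (s : ℝ), 0 < s → y ∈ ball w s → s ^ α * setAvg (ball w s) f ≤ M) :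
    r ^ α * setAvg (ball z r) f - (d - α) * r ^ (α - 1) * setAvg (ball z r) f * ‖y - x‖ ≤ M := by
  set F := setAvg (ball z r) f
  set h := ‖y - x‖
  have hh : 0 < h := norm_pos_iff.mpr (sub_ne_zero.mpr hyx)
  have hrh : 0 < r + h := by linarith
  have hy : y ∈ ball (z + (y - x)) (r + h) := by
    have hdist : dist y (z + (y - x)) = dist x z := by
      rw [dist_eq_norm, dist_eq_norm]
      congr 1
      abel
    rw [mem_ball, hdist]
    linarith
  have hsub : ball z r ⊆ ball (z + (y - x)) (r + h) :=
    ball_subset_ball' (by rw [dist_self_add_right])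
  have hbern := Real.one_add_mul_le_rpow_one_add_of_nonpos (p := α - d)
    (show -1 < h / r by have := div_pos hh hr; linarith) (by linarith)
  have hsplit : (r + h) ^ (α - d) = r ^ (α - d) * (1 + h / r) ^ (α - d) := by
    rw [← Real.mul_rpow hr.le (by positivity), mul_add, mul_one, mul_div_cancel₀ _ hr.ne']
  calc r ^ α * F - (d - α) * r ^ (α - 1) * F * h
      = r ^ (α - d) * (1 + (α - d) * (h / r)) * (r ^ d * F) := by
        rw [Real.rpow_sub hr, Real.rpow_sub hr, Real.rpow_one, Real.rpow_natCast]
        field_simp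
        ring
    _ ≤ (r + h) ^ (α - d) * (r ^ d * F) := by
        rw [hsplit]
        gcongr
        exact mul_nonneg (pow_nonneg hr.le d) (setAvg_nonneg hf)
    _ ≤ (r + h) ^ (α - d) * ((r + h) ^ d * setAvg (ball (z + (y - x)) (r + h)) f) :=
        mul_le_mul_of_nonneg_left (pow_mul_setAvg_ball_le_of_subset hf hloc hr hrh hsub)
          (by positivity)
    _ = (r + h) ^ α * setAvg (ball (z + (y - x)) (r + h)) f := by
        rw [Real.rpow_sub hrh, Real.rpow_natCast]
        field_simp
    _ ≤ M := hM _ _ hrh hy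

end MaximalFunction

theorem stmt5_general (d : ℕ) (α : ℝ) (hαd : α < d)
    (f : Euc d → ℝ) (hf : 0 ≤ f) (hloc : MeasureTheory.LocallyIntegrable f volume)
    (x z : Euc d) (r : ℝ) (hr : 0 < r)
    (L : Euc d →L[ℝ] ℝ) (hdiff : HasFDerivAt (Mu d α f) L x)
    (hx : x ∈ closure (ball z r))
    (hmax : Mu d α f x = r ^ α * setAvg (ball z r) f) :
    ‖L‖ ≤ (d - α) * r ^ (α - 1) * setAvg (ball z r) f ∧ (x ∈ ball z r → L = 0) := by
  have hF := setAvg_nonneg (s := ball z r) hf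
  have hC : 0 ≤ (d - α) * r ^ (α - 1) * setAvg (ball z r) f :=
    mul_nonneg (mul_nonneg (by linarith) (Real.rpow_nonneg hr.le _)) hF
  rcases hF.eq_or_lt with hF0 | hFpos
  · have hmin : IsLocalMin (Mu d α f) x :=
      Eventually.of_forall fun y => by rw [hmax, ← hF0, mul_zero]; exact Mu_nonneg hf y
    have hL := hmin.hasFDerivAt_eq_zero hdiff
    exact ⟨hL ▸ norm_zero.trans_le hC, fun _ => hL⟩
  have hballs := eventually_forall_ball_le_Mu hdiff.continuousAt
    (hmax ▸ mul_pos (Real.rpow_pos_of_pos hr α) hFpos)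
  refine ⟨hdiff.norm_le_of_eventually_sub_le hC ?_, fun hxB => ?_⟩
  · filter_upwards [hballs] with y hy
    rcases eq_or_ne y x with rfl | hyx
    · simp
    rw [hmax]
    exact sub_le_of_forall_ball_le hαd.le hf hloc hr
      (mem_closedBall.mp (closure_ball z hr.ne' ▸ hx)) hyx hy
  · refine IsLocalMin.hasFDerivAt_eq_zero ?_ hdiff
    filter_upwards [hballs, isOpen_ball.mem_nhds hxB] with y hy hyB
    exact hmax ▸ hy z r hr hyB

theorem stmt5 (d : ℕ) (α : ℝ) (hα : 0 < α) (hαd : α < d)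
    (f : Euc d → ℝ) (hf : 0 ≤ f) (hloc : MeasureTheory.LocallyIntegrable f volume)
    (x z : Euc d) (r : ℝ) (hr : 0 < r)
    (L : Euc d →L[ℝ] ℝ) (hdiff : HasFDerivAt (Mu d α f) L x)
    (hx : x ∈ closure (ball z r))
    (hmax : Mu d α f x = r ^ α * setAvg (ball z r) f) :
    ‖L‖ ≤ (d - α) * r ^ (α - 1) * setAvg (ball z r) f ∧ (x ∈ ball z r → L = 0) :=
  stmt5_general d α hαd f hf hloc x z r hr L hdiff hx hmax
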